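/- If the gain is taken as S = (1/2)Φ with Û = ΘX, ΘΦ = I_r, Cov(U,U)=Cov(Û,Û), U uncorrelated with X, and the residual condition Cov(X - ΦÛ, Û) = 0 holds, then trace Cov(Z,Z) = trace Cov(X,X) - (1/2) trace(Φ Cov(Û,Û) Φ^T), quantifying the variance reduction of the MFEnKF total variate. -/

import Mathlib

open MeasureTheory Matrix

/-- Component-wise mean of a random vector. -/
noncomputable def rmean {Ω : Type*} [MeasureSpace Ω] {ι : Type*}
    (X : Ω → ι → ℝ) : ι → ℝ := fun i => ∫ ω, X ω i

/-- Covariance matrix of two random vectors. -/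
noncomputable def rcov {Ω : Type*} [MeasureSpace Ω] {ι κ : Type*}
    (X : Ω → ι → ℝ) (Y : Ω → κ → ℝ) : Matrix ι κ ℝ :=
  Matrix.of fun i j => ∫ ω, (X ω i - rmean X i) * (Y ω j - rmean Y j)

/-!
Write `D = Û - U`, so that `Z = X - ½ΦD` and, by bilinearity,
`Cov(Z,Z) = Cov(X,X) - ½Φ Cov(D,X) - ½Cov(X,D) Φᵀ + ¼Φ Cov(D,D) Φᵀ`.
With `C = Cov(Û,Û)`, the residual condition and `Cov(X,U) = 0` give `Cov(X,D) = ΦC`, while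
`Û = ΘX` is uncorrelated with `U` and `Cov(U,U) = C`, so `Cov(D,D) = 2C`.
Hence `Cov(Z,Z) = Cov(X,X) - ½ΦCΦᵀ`.
-/

open ProbabilityTheory

section rcov

variable {Ω : Type*} [MeasureSpace Ω] {ι κ τ : Type*}

lemma rcov_apply (X : Ω → ι → ℝ) (Y : Ω → κ → ℝ) (i : ι) (j : κ) :
    rcov X Y i j = cov[fun ω ↦ X ω i, fun ω ↦ Y ω j] := rfl

lemma rcov_transpose (X : Ω → ι → ℝ) (Y : Ω → κ → ℝ) : (rcov X Y)ᵀ = rcov Y X := by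
  ext j i
  exact covariance_comm _ _

lemma memLp_mulVec [Fintype κ] {X : Ω → κ → ℝ} (hX : ∀ k, MemLp (fun ω ↦ X ω k) 2)
    (A : Matrix ι κ ℝ) (i : ι) : MemLp (fun ω ↦ (A *ᵥ X ω) i) 2 :=
  memLp_finsetSum _ fun k _ ↦ (hX k).const_mul (A i k)

variable [IsFiniteMeasure (volume : Measure Ω)]

lemma rcov_sub_left {X Y : Ω → ι → ℝ} {W : Ω → κ → ℝ}
    (hX : ∀ i, MemLp (fun ω ↦ X ω i) 2) (hY : ∀ i, MemLp (fun ω ↦ Y ω i) 2)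
    (hW : ∀ j, MemLp (fun ω ↦ W ω j) 2) :
    rcov (fun ω ↦ X ω - Y ω) W = rcov X W - rcov Y W := by
  ext i j
  exact covariance_fun_sub_left (hX i) (hY i) (hW j)

lemma rcov_sub_right {X : Ω → ι → ℝ} {Y W : Ω → κ → ℝ}
    (hX : ∀ i, MemLp (fun ω ↦ X ω i) 2) (hY : ∀ j, MemLp (fun ω ↦ Y ω j) 2)
    (hW : ∀ j, MemLp (fun ω ↦ W ω j) 2) :
    rcov X (fun ω ↦ Y ω - W ω) = rcov X Y - rcov X W := by
  ext i j
  exact covariance_fun_sub_right (hX i) (hY j) (hW j)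

lemma rcov_mulVec_left [Fintype ι] {X : Ω → ι → ℝ} {Y : Ω → κ → ℝ}
    (hX : ∀ i, MemLp (fun ω ↦ X ω i) 2) (hY : ∀ j, MemLp (fun ω ↦ Y ω j) 2)
    (A : Matrix τ ι ℝ) :
    rcov (fun ω ↦ A *ᵥ X ω) Y = A * rcov X Y := by
  ext t j
  rw [rcov_apply, mul_apply]
  simp only [mulVec, dotProduct]
  rw [covariance_fun_sum_left (fun k ↦ (hX k).const_mul (A t k)) (hY j)]
  simp only [covariance_const_mul_left, rcov_apply]

lemma rcov_mulVec_right [Fintype κ] {X : Ω → ι → ℝ} {Y : Ω → κ → ℝ}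
    (hX : ∀ i, MemLp (fun ω ↦ X ω i) 2) (hY : ∀ j, MemLp (fun ω ↦ Y ω j) 2)
    (A : Matrix τ κ ℝ) :
    rcov X (fun ω ↦ A *ᵥ Y ω) = rcov X Y * Aᵀ := by
  rw [← rcov_transpose, rcov_mulVec_left hY hX, transpose_mul, rcov_transpose]

lemma rcov_sub_mulVec_self [Fintype ι] [Fintype κ] {X : Ω → ι → ℝ} {D : Ω → κ → ℝ}
    (hX : ∀ i, MemLp (fun ω ↦ X ω i) 2) (hD : ∀ k, MemLp (fun ω ↦ D ω k) 2)
    (A : Matrix ι κ ℝ) :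
    rcov (fun ω ↦ X ω - A *ᵥ D ω) (fun ω ↦ X ω - A *ᵥ D ω)
      = rcov X X - A * rcov D X - rcov X D * Aᵀ + A * rcov D D * Aᵀ := by
  have hAD := memLp_mulVec hD A
  have hXAD : ∀ i, MemLp (fun ω ↦ (X ω - A *ᵥ D ω) i) 2 := fun i ↦ (hX i).sub (hAD i)
  rw [rcov_sub_left hX hAD hXAD, rcov_sub_right hX hX hAD,
    rcov_sub_right hAD hX hAD, rcov_mulVec_left hD hX, rcov_mulVec_right hX hD,
    rcov_mulVec_left hD hAD, rcov_mulVec_right hD hD, Matrix.mul_assoc]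
  abel

lemma rcov_sub_self_of_rcov_eq_zero {X Y : Ω → ι → ℝ}
    (hX : ∀ i, MemLp (fun ω ↦ X ω i) 2) (hY : ∀ i, MemLp (fun ω ↦ Y ω i) 2)
    (hXY : rcov X Y = 0) :
    rcov (fun ω ↦ X ω - Y ω) (fun ω ↦ X ω - Y ω) = rcov X X + rcov Y Y := by
  have hXsubY : ∀ i, MemLp (fun ω ↦ (X ω - Y ω) i) 2 := fun i ↦ (hX i).sub (hY i)
  have hYX : rcov Y X = 0 := by rw [← rcov_transpose, hXY, transpose_zero]
  rw [rcov_sub_left hX hY hXsubY, rcov_sub_right hX hX hY,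
    rcov_sub_right hY hX hY, hXY, hYX]
  abel

end rcov

theorem mfenkf_variance_reduction_general
    {Ω : Type*} [MeasureSpace Ω] [IsProbabilityMeasure (volume : Measure Ω)]
    {n r : ℕ} (X : Ω → Fin n → ℝ) (U : Ω → Fin r → ℝ)
    (Θ : Matrix (Fin r) (Fin n) ℝ) (Φ : Matrix (Fin n) (Fin r) ℝ)
    (Uhat : Ω → Fin r → ℝ) (hUhatdef : ∀ ω, Uhat ω = Θ.mulVec (X ω))
    (hX : ∀ i, MemLp (fun ω => X ω i) 2)
    (hU : ∀ i, MemLp (fun ω => U ω i) 2)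
    (hXU : rcov X U = 0)
    (hcoveq : rcov U U = rcov Uhat Uhat)
    (hres : rcov (fun ω => X ω - Φ.mulVec (Uhat ω)) Uhat = 0)
    (Z : Ω → Fin n → ℝ)
    (hZ : ∀ ω, Z ω = X ω - (1 / 2 : ℝ) • Φ.mulVec (Uhat ω - U ω)) :
    (rcov Z Z).trace
      = (rcov X X).trace - (1 / 2 : ℝ) * (Φ * rcov Uhat Uhat * Φᵀ).trace := by
  have hUhat_eq : Uhat = fun ω ↦ Θ *ᵥ X ω := funext hUhatdef
  have hUhat : ∀ k, MemLp (fun ω ↦ Uhat ω k) 2 := by rw [hUhat_eq]; exact memLp_mulVec hX Θ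
  have hD : ∀ k, MemLp (fun ω ↦ (Uhat ω - U ω) k) 2 := fun k ↦ (hUhat k).sub (hU k)
  set C := rcov Uhat Uhat
  have hXUhat : rcov X Uhat = Φ * C := by
    rwa [rcov_sub_left hX (memLp_mulVec hUhat Φ) hUhat, rcov_mulVec_left hUhat hUhat,
      sub_eq_zero] at hres
  have hXD : rcov X (fun ω ↦ Uhat ω - U ω) = Φ * C := by
    rw [rcov_sub_right hX hUhat hU, hXUhat, hXU, sub_zero]
  have hUhatU : rcov Uhat U = 0 := by
    rw [hUhat_eq, rcov_mulVec_left hX hU, hXU, Matrix.mul_zero]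
  have hDD : rcov (fun ω ↦ Uhat ω - U ω) (fun ω ↦ Uhat ω - U ω) = (2 : ℝ) • C := by
    rw [rcov_sub_self_of_rcov_eq_zero hUhat hU hUhatU, hcoveq, two_smul]
  have hC : Cᵀ = C := rcov_transpose _ _
  have hZ' : Z = fun ω ↦ X ω - ((1 / 2 : ℝ) • Φ) *ᵥ (Uhat ω - U ω) := by
    funext ω; rw [hZ, smul_mulVec]
  rw [hZ', rcov_sub_mulVec_self hX hD, hDD, ← rcov_transpose X (fun ω ↦ Uhat ω - U ω), hXD,
    transpose_mul, hC]
  simp only [transpose_smul, Matrix.smul_mul, Matrix.mul_smul, Matrix.mul_assoc, smul_smul,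
    trace_sub, trace_add, trace_smul, smul_eq_mul]
  ring

/-- **Variance reduction of the MFEnKF total variate.** With `S = (1/2)Φ`,
`Û = ΘX`, `ΘΦ = I`, `Cov(U,U) = Cov(Û,Û)`, `U` uncorrelated with `X`, and the
residual condition `Cov(X - ΦÛ, Û) = 0`, one has
`trace Cov(Z,Z) = trace Cov(X,X) - (1/2) trace(Φ Cov(Û,Û) Φᵀ)`. -/
theorem mfenkf_variance_reduction
    {Ω : Type*} [MeasureSpace Ω] [IsProbabilityMeasure (volume : Measure Ω)]
    {n r : ℕ} (X : Ω → Fin n → ℝ) (U : Ω → Fin r → ℝ)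
    (Θ : Matrix (Fin r) (Fin n) ℝ) (Φ : Matrix (Fin n) (Fin r) ℝ)
    (hΘΦ : Θ * Φ = 1)
    (Uhat : Ω → Fin r → ℝ) (hUhatdef : ∀ ω, Uhat ω = Θ.mulVec (X ω))
    (hX : ∀ i, MemLp (fun ω => X ω i) 2)
    (hU : ∀ i, MemLp (fun ω => U ω i) 2)
    (hUX : rcov U X = 0) (hXU : rcov X U = 0)
    (hcoveq : rcov U U = rcov Uhat Uhat)
    (hres : rcov (fun ω => X ω - Φ.mulVec (Uhat ω)) Uhat = 0)
    (Z : Ω → Fin n → ℝ)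
    (hZ : ∀ ω, Z ω = X ω - (1 / 2 : ℝ) • Φ.mulVec (Uhat ω - U ω)) :
    (rcov Z Z).trace
      = (rcov X X).trace - (1 / 2 : ℝ) * (Φ * rcov Uhat Uhat * Φᵀ).trace :=
  mfenkf_variance_reduction_general X U Θ Φ Uhat hUhatdef hX hU hXU hcoveq hres Z hZ
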